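/- arXiv:1702.07441 — 3 statements merged into one kernel-verified Lean document; each statement's English description precedes it below -/
import Mathlib

section
/- Let P and P_ε be Markov kernels on X with π stationary for P, P acting on L²(π) through T_P and L²(π)-geometrically ergodic with rate 1−α, P_ε acting on L²(π) through T_ε, ‖T_P − T_ε‖ ≤ ε, and 0 < ε < α. Suppose P_ε has a stationary probability measure π_ε with π_ε ≪ π and π ≪ π_ε, and that πP_εⁿ → π_ε in total variation as n → ∞. Then dπ_ε/dπ ∈ L²(π) and ‖π_ε‖₂ ≤ α/(α−ε). -/
/-!
Let `fₙ` be the `π`-density of `πP_εⁿ`, so that `fₙ₊₁ = T_ε fₙ`. Since `T` fixes `1` and contracts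
mean-zero functions by `1 - α`, the decomposition `T_ε f - 1 = T (f - 1) - (T - T_ε) f` gives
`‖fₙ₊₁ - 1‖₂ ≤ (1 - α) ‖fₙ - 1‖₂ + ε (1 + ‖fₙ - 1‖₂)`, whose fixed point is `c = ε / (α - ε)`;
hence `‖fₙ‖₂ ≤ 1 + c = α / (α - ε)` for all `n`. The total variation distance dominates the
`L¹(π)` distance of the densities, so a subsequence converges `π`-a.e. to `dπ_ε/dπ`, and Fatou's lemma
carries the uniform `L²` bound over to the limit.
-/

open MeasureTheory ProbabilityTheory Filter ENNReal

variable {X : Type*} [MeasurableSpace X]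

/-- The real-valued Radon–Nikodym density of `μ` with respect to `π`. -/
noncomputable def rnd (π μ : Measure X) (x : X) : ℝ := (μ.rnDeriv π x).toReal

/-- `n`-fold action of the kernel `P` on the measure `μ`, i.e. `μPⁿ`. -/
noncomputable def mIter (P : Kernel X X) (n : ℕ) (μ : Measure X) : Measure X :=
  (fun ν => ν.bind (fun x => P x))^[n] μ

/-- `n`-fold composition of the kernel `P`, i.e. `Pⁿ`. -/
noncomputable def kpow (P : Kernel X X) : ℕ → Kernel X X
  | 0 => Kernel.id
  | n + 1 => (kpow P n).comp P

/-- `‖μ − ν‖₂`, the `L²(π)` distance between the `π`-densities of `μ` and `ν`. -/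
noncomputable def d2 (π μ ν : Measure X) : ℝ :=
  (eLpNorm (fun x => rnd π μ x - rnd π ν x) 2 π).toReal

/-- `‖μ − ν‖₁`, the `L¹(π)` distance between the `π`-densities of `μ` and `ν`. -/
noncomputable def d1 (π μ ν : Measure X) : ℝ := ∫ x, |rnd π μ x - rnd π ν x| ∂π

/-- `P` acts on `L²(π)` through the bounded linear operator `T`:
for every probability measure `μ ≪ π` with `dμ/dπ ∈ L²(π)`,
`T(dμ/dπ)` is a version of `d(μP)/dπ`. -/
def ActsOn (π : Measure X) (P : Kernel X X) (T : Lp ℝ 2 π →L[ℝ] Lp ℝ 2 π) : Prop :=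
  ∀ μ : Measure X, IsProbabilityMeasure μ → μ ≪ π →
    ∀ h : MemLp (rnd π μ) 2 π,
      ⇑(T (h.toLp (rnd π μ))) =ᵐ[π] rnd π (μ.bind (fun x => P x))

/-- `L²(π)`-geometric ergodicity with rate `1 − α`:
`T` contracts mean-zero functions by the factor `1 − α`. -/
def IsGeomErg (π : Measure X) (T : Lp ℝ 2 π →L[ℝ] Lp ℝ 2 π) (α : ℝ) : Prop :=
  ∀ f : Lp ℝ 2 π, ∫ x, f x ∂π = 0 → ‖T f‖ ≤ (1 - α) * ‖f‖

/-- Reversibility of `P` with respect to `π`. -/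
def Reversible (π : Measure X) (P : Kernel X X) : Prop :=
  ∀ A B : Set X, MeasurableSet A → MeasurableSet B →
    ∫⁻ x in A, P x B ∂π = ∫⁻ x in B, P x A ∂π

/-- `∫ h dPᵏ(x,·)`, the `k`-step forward operator applied to `h`. -/
noncomputable def kInt (P : Kernel X X) (k : ℕ) (h : X → ℝ) (x : X) : ℝ :=
  ∫ y, h y ∂(kpow P k x)

/-- `μPᵏh = ∫∫ h(y) Pᵏ(x,dy) μ(dx)`. -/
noncomputable def mkInt (P : Kernel X X) (μ : Measure X) (k : ℕ) (h : X → ℝ) : ℝ :=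
  ∫ x, kInt P k h x ∂μ

/-- Path covariance `Cov_μ(f(X_t), g(X_{t+s}))` of the chain with kernel `P` started at `μ`. -/
noncomputable def covPath (P : Kernel X X) (μ : Measure X) (t s : ℕ) (f g : X → ℝ) : ℝ :=
  ∫ x, (∫ y, (∫ z, (f y - mkInt P μ t f) * (g z - mkInt P μ (t + s) g)
    ∂(kpow P s y)) ∂(kpow P t x)) ∂μ

/-- Path covariance `Cov_μ(f(X_m), g(X_n))` of the chain with kernel `P` started at `μ`. -/
noncomputable def covPath2 (P : Kernel X X) (μ : Measure X) (m n : ℕ) (f g : X → ℝ) : ℝ :=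
  ∫ x, (∫ y, (∫ z, (f y - mkInt P μ (min m n) f) * (g z - mkInt P μ (max m n) g)
    ∂(kpow P (max m n - min m n) y)) ∂(kpow P (min m n) x)) ∂μ

lemma measurable_rnd (π μ : Measure X) : Measurable (rnd π μ) :=
  (Measure.measurable_rnDeriv μ π).ennreal_toReal

lemma mIter_succ (P : Kernel X X) (n : ℕ) (μ : Measure X) :
    mIter P (n + 1) μ = (mIter P n μ).bind (fun x => P x) :=
  Function.iterate_succ_apply' _ n μ

instance isProbabilityMeasure_mIter (P : Kernel X X) [IsMarkovKernel P] (n : ℕ)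
    (μ : Measure X) [IsProbabilityMeasure μ] : IsProbabilityMeasure (mIter P n μ) := by
  induction n with
  | zero => assumption
  | succ n ih => rw [mIter_succ]; exact inferInstanceAs (IsProbabilityMeasure (P ∘ₘ _))

lemma mIter_absolutelyContinuous {P : Kernel X X} {μ ν : Measure X}
    (hν : ν.bind (fun x => P x) = ν) (hμν : μ ≪ ν) (n : ℕ) : mIter P n μ ≪ ν := by
  induction n with
  | zero => exact hμν
  | succ n ih => rw [mIter_succ, ← hν]; exact ih.comp_right P

section TotalVariation

variable {π : Measure X} [SigmaFinite π]

lemma lintegral_rnDeriv_tsub_le (μ ν : Measure X) [IsFiniteMeasure μ] [IsFiniteMeasure ν]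
    (hμ : μ ≪ π) (hν : ν ≪ π) :
    ∫⁻ x, (μ.rnDeriv π x - ν.rnDeriv π x) ∂π ≤ (μ - ν) Set.univ := by
  set A : Set X := {x | ν.rnDeriv π x < μ.rnDeriv π x}
  have hA : MeasurableSet A :=
    measurableSet_lt (Measure.measurable_rnDeriv ν π) (Measure.measurable_rnDeriv μ π)
  -- `μ - ν` is an infimum of measures; it can only be evaluated on sets where `ν ≤ μ`.
  have hνμ : ν.restrict A ≤ μ.restrict A := by
    refine Measure.le_iff.mpr fun s hs => ?_
    rw [Measure.restrict_apply hs, Measure.restrict_apply hs,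
      ← Measure.setLIntegral_rnDeriv hν, ← Measure.setLIntegral_rnDeriv hμ]
    exact setLIntegral_mono (Measure.measurable_rnDeriv μ π) fun x hx => hx.2.le
  have hcompl : ∫⁻ x in Aᶜ, (μ.rnDeriv π x - ν.rnDeriv π x) ∂π = 0 := by
    rw [setLIntegral_congr_fun hA.compl fun x hx => tsub_eq_zero_of_le (not_lt.mp hx)]
    simp
  calc ∫⁻ x, (μ.rnDeriv π x - ν.rnDeriv π x) ∂π
      = ∫⁻ x in A, (μ.rnDeriv π x - ν.rnDeriv π x) ∂π := by
        rw [← lintegral_add_compl _ hA, hcompl, add_zero]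
    _ = μ A - ν A := by
        rw [lintegral_sub (Measure.measurable_rnDeriv ν π)
          (by rw [Measure.setLIntegral_rnDeriv hν]; exact measure_ne_top ν A)
          ((ae_restrict_iff' hA).mpr (.of_forall fun x hx => hx.le)),
          Measure.setLIntegral_rnDeriv hμ, Measure.setLIntegral_rnDeriv hν]
    _ = (μ - ν) A := by
        rw [← Measure.restrict_apply_self (μ - ν), Measure.restrict_sub_eq_restrict_sub_restrict hA,
          Measure.sub_apply hA hνμ, Measure.restrict_apply_self, Measure.restrict_apply_self]
    _ ≤ (μ - ν) Set.univ := measure_mono A.subset_univ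

lemma enorm_toReal_sub_toReal {a b : ℝ≥0∞} (ha : a ≠ ∞) (hb : b ≠ ∞) :
    ‖a.toReal - b.toReal‖ₑ = (a - b) + (b - a) := by
  rcases le_total a b with hab | hab
  · rw [tsub_eq_zero_of_le hab, zero_add, ← enorm_neg, neg_sub,
      ← ENNReal.toReal_sub_of_le hab hb, Real.enorm_of_nonneg toReal_nonneg,
      ofReal_toReal (sub_ne_top hb)]
  · rw [tsub_eq_zero_of_le hab, add_zero, ← ENNReal.toReal_sub_of_le hab ha,
      Real.enorm_of_nonneg toReal_nonneg, ofReal_toReal (sub_ne_top ha)]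

lemma eLpNorm_one_rnd_sub_le (μ ν : Measure X) [IsFiniteMeasure μ] [IsFiniteMeasure ν]
    (hμ : μ ≪ π) (hν : ν ≪ π) :
    eLpNorm (rnd π μ - rnd π ν) 1 π ≤ (μ - ν) Set.univ + (ν - μ) Set.univ := by
  have hdiff : ∀ᵐ x ∂π, ‖(rnd π μ - rnd π ν) x‖ₑ
      = (μ.rnDeriv π x - ν.rnDeriv π x) + (ν.rnDeriv π x - μ.rnDeriv π x) := by
    filter_upwards [Measure.rnDeriv_lt_top μ π, Measure.rnDeriv_lt_top ν π] with x hμx hνx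
    exact enorm_toReal_sub_toReal hμx.ne hνx.ne
  rw [eLpNorm_one_eq_lintegral_enorm, lintegral_congr_ae hdiff,
    lintegral_add_left (f := fun x => μ.rnDeriv π x - ν.rnDeriv π x) (by fun_prop)]
  exact add_le_add (lintegral_rnDeriv_tsub_le μ ν hμ hν) (lintegral_rnDeriv_tsub_le ν μ hν hμ)

variable {μ : ℕ → Measure X} [∀ n, IsFiniteMeasure (μ n)] {ν : Measure X} [IsFiniteMeasure ν]

lemma exists_seq_ae_tendsto_rnd_of_tendsto_tv (hμ : ∀ n, μ n ≪ π) (hν : ν ≪ π)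
    (htv : Tendsto (fun n => (μ n - ν) Set.univ + (ν - μ n) Set.univ) atTop (nhds 0)) :
    ∃ ns : ℕ → ℕ, StrictMono ns ∧
      ∀ᵐ x ∂π, Tendsto (fun k => rnd π (μ (ns k)) x) atTop (nhds (rnd π ν x)) := by
  refine TendstoInMeasure.exists_seq_tendsto_ae (tendstoInMeasure_of_tendsto_eLpNorm one_ne_zero
    (fun n => (measurable_rnd π (μ n)).aestronglyMeasurable)
    (measurable_rnd π ν).aestronglyMeasurable ?_)
  exact tendsto_of_tendsto_of_tendsto_of_le_of_le tendsto_const_nhds htv (fun _ => zero_le)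
    fun n => eLpNorm_one_rnd_sub_le (μ n) ν (hμ n) hν

lemma eLpNorm_rnd_le_of_tendsto_tv {p C : ℝ≥0∞} (hμ : ∀ n, μ n ≪ π) (hν : ν ≪ π)
    (htv : Tendsto (fun n => (μ n - ν) Set.univ + (ν - μ n) Set.univ) atTop (nhds 0))
    (hC : ∀ n, eLpNorm (rnd π (μ n)) p π ≤ C) : eLpNorm (rnd π ν) p π ≤ C := by
  obtain ⟨ns, -, hlim⟩ := exists_seq_ae_tendsto_rnd_of_tendsto_tv hμ hν htv
  calc eLpNorm (rnd π ν) p π ≤ atTop.liminf fun k => eLpNorm (rnd π (μ (ns k))) p π :=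
        Lp.eLpNorm_lim_le_liminf_eLpNorm
          (fun k => (measurable_rnd π (μ (ns k))).aestronglyMeasurable) _ hlim
    _ ≤ C := liminf_le_of_frequently_le' (.of_forall fun k => hC (ns k))

end TotalVariation

lemma norm_apply_sub_le_of_apply_eq {E : Type*} [SeminormedAddCommGroup E] [NormedSpace ℝ E]
    {T S : E →L[ℝ] E} {ε : ℝ} (hTS : ‖T - S‖ ≤ ε) {e : E} (he : T e = e) (u : E) :
    ‖S u - e‖ ≤ ‖T (u - e)‖ + ε * ‖u‖ :=
  calc ‖S u - e‖ = ‖T (u - e) - (T - S) u‖ := by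
        rw [map_sub, he, sub_apply]; abel_nf
    _ ≤ ‖T (u - e)‖ + ‖(T - S) u‖ := norm_sub_le _ _
    _ ≤ ‖T (u - e)‖ + ε * ‖u‖ := by
        gcongr; exact ((T - S).le_opNorm u).trans (by gcongr)

section Density

variable {π : Measure X} {P : Kernel X X} {T : Lp ℝ 2 π →L[ℝ] Lp ℝ 2 π}

lemma ActsOn.memLp_rnd_bind (hT : ActsOn π P T) {μ : Measure X} [IsProbabilityMeasure μ]
    (hμ : μ ≪ π) (h : MemLp (rnd π μ) 2 π) : MemLp (rnd π (μ.bind (fun x => P x))) 2 π :=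
  (Lp.memLp _).ae_eq (hT μ ‹_› hμ h)

lemma ActsOn.toLp_rnd_bind (hT : ActsOn π P T) {μ : Measure X} [IsProbabilityMeasure μ]
    (hμ : μ ≪ π) (h : MemLp (rnd π μ) 2 π) (h' : MemLp (rnd π (μ.bind (fun x => P x))) 2 π) :
    h'.toLp _ = T (h.toLp (rnd π μ)) :=
  Lp.ext (h'.coeFn_toLp.trans (hT μ ‹_› hμ h).symm)

variable [IsProbabilityMeasure π]

lemma rnd_self_ae_eq_one : rnd π π =ᵐ[π] 1 := by
  filter_upwards [Measure.rnDeriv_self π] with x hx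
  simp [rnd, hx]

lemma norm_const_one : ‖Lp.const 2 π (1 : ℝ)‖ = 1 := by
  simp [Lp.norm_const]

lemma toLp_rnd_self (h : MemLp (rnd π π) 2 π) : h.toLp (rnd π π) = Lp.const 2 π (1 : ℝ) :=
  Lp.ext (h.coeFn_toLp.trans (rnd_self_ae_eq_one.trans (Lp.coeFn_const 2 π 1).symm))

lemma integral_toLp_rnd_sub_const_one {μ : Measure X} [IsProbabilityMeasure μ] (hμ : μ ≪ π)
    (h : MemLp (rnd π μ) 2 π) : ∫ x, (h.toLp (rnd π μ) - Lp.const 2 π (1 : ℝ)) x ∂π = 0 := by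
  have hμ1 : ∫ x, rnd π μ x ∂π = 1 := by
    simpa [rnd] using Measure.integral_toReal_rnDeriv hμ
  rw [integral_congr_ae (Lp.coeFn_sub _ _)]
  simp only [Pi.sub_apply]
  rw [integral_sub ((Lp.memLp _).integrable one_le_two) ((Lp.memLp _).integrable one_le_two),
    integral_congr_ae h.coeFn_toLp, integral_congr_ae (Lp.coeFn_const 2 π 1)]
  simp [hμ1]

lemma ActsOn.apply_const_one (hT : ActsOn π P T) (hstat : π.bind (fun x => P x) = π) :
    T (Lp.const 2 π (1 : ℝ)) = Lp.const 2 π (1 : ℝ) := by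
  have h : MemLp (rnd π π) 2 π := (memLp_const 1).ae_eq rnd_self_ae_eq_one.symm
  have h' : MemLp (rnd π (π.bind (fun x => P x))) 2 π := by rwa [hstat]
  rw [← toLp_rnd_self h, ← hT.toLp_rnd_bind .rfl h h']
  simp_rw [hstat]

end Density

section Perturbation

variable {π : Measure X} [IsProbabilityMeasure π] {P Pe : Kernel X X} [IsMarkovKernel Pe]
  {T Te : Lp ℝ 2 π →L[ℝ] Lp ℝ 2 π} {α ε : ℝ}

lemma exists_memLp_rnd_mIter_norm_sub_one_le (hstat : π.bind (fun x => P x) = π)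
    (hα1 : α < 1) (hε0 : 0 < ε) (hεα : ε < α) (hT : ActsOn π P T) (hTe : ActsOn π Pe Te)
    (hge : IsGeomErg π T α) (hdiff : ‖T - Te‖ ≤ ε) (hac : ∀ n, mIter Pe n π ≪ π) (n : ℕ) :
    ∃ h : MemLp (rnd π (mIter Pe n π)) 2 π,
      ‖h.toLp (rnd π (mIter Pe n π)) - Lp.const 2 π (1 : ℝ)‖ ≤ ε / (α - ε) := by
  set c := ε / (α - ε)
  have hc : 0 ≤ c := div_nonneg hε0.le (sub_nonneg.mpr hεα.le)
  induction n with
  | zero =>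
    have h : MemLp (rnd π π) 2 π := (memLp_const 1).ae_eq rnd_self_ae_eq_one.symm
    refine ⟨h, ?_⟩
    change ‖h.toLp (rnd π π) - _‖ ≤ c
    rwa [toLp_rnd_self h, sub_self, norm_zero]
  | succ n ih =>
    obtain ⟨h, hdist⟩ := ih
    set u := h.toLp (rnd π (mIter Pe n π))
    have hbind := hTe.memLp_rnd_bind (hac n) h
    have h' : MemLp (rnd π (mIter Pe (n + 1) π)) 2 π := by rwa [mIter_succ]
    have hTeu : h'.toLp _ = Te u := by
      rw [← hTe.toLp_rnd_bind (hac n) h hbind]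
      exact MemLp.toLp_congr _ _ (by rw [mIter_succ])
    refine ⟨h', ?_⟩
    have hu : ‖u‖ ≤ 1 + c := by
      linarith [norm_le_norm_sub_add u (Lp.const 2 π (1 : ℝ)), norm_const_one (π := π)]
    calc ‖h'.toLp _ - Lp.const 2 π 1‖ ≤ ‖T (u - Lp.const 2 π 1)‖ + ε * ‖u‖ := by
          rw [hTeu]; exact norm_apply_sub_le_of_apply_eq hdiff (hT.apply_const_one hstat) u
      _ ≤ (1 - α) * c + ε * (1 + c) := by
          gcongr
          exact (hge _ (integral_toLp_rnd_sub_const_one (hac n) h)).trans (by gcongr)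
      _ = c := by
          have hcα : c * (α - ε) = ε := div_mul_cancel₀ ε (sub_ne_zero.mpr hεα.ne')
          linear_combination -hcα

lemma eLpNorm_rnd_mIter_le (hstat : π.bind (fun x => P x) = π)
    (hα1 : α < 1) (hε0 : 0 < ε) (hεα : ε < α) (hT : ActsOn π P T) (hTe : ActsOn π Pe Te)
    (hge : IsGeomErg π T α) (hdiff : ‖T - Te‖ ≤ ε) (hac : ∀ n, mIter Pe n π ≪ π) (n : ℕ) :
    eLpNorm (rnd π (mIter Pe n π)) 2 π ≤ ENNReal.ofReal (α / (α - ε)) := by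
  obtain ⟨h, hdist⟩ :=
    exists_memLp_rnd_mIter_norm_sub_one_le hstat hα1 hε0 hεα hT hTe hge hdiff hac n
  have hαε : 0 < α - ε := sub_pos.mpr hεα
  have hnorm : ‖h.toLp (rnd π (mIter Pe n π))‖ ≤ α / (α - ε) :=
    calc _ ≤ ‖h.toLp _ - Lp.const 2 π (1 : ℝ)‖ + ‖Lp.const 2 π (1 : ℝ)‖ :=
          norm_le_norm_sub_add _ _
      _ ≤ ε / (α - ε) + 1 := by rw [norm_const_one]; gcongr
      _ = α / (α - ε) := by field_simp; ring
  rw [Lp.norm_toLp] at hnorm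
  exact (ENNReal.le_ofReal_iff_toReal_le h.eLpNorm_ne_top
    (div_pos (hε0.trans hεα) hαε).le).mpr hnorm

end Perturbation

theorem stmt3_general (π : Measure X) [IsProbabilityMeasure π] (P Pe : Kernel X X)
    [IsMarkovKernel Pe]
    (hstat : π.bind (fun x => P x) = π)
    (α ε : ℝ) (hα1 : α < 1) (hε0 : 0 < ε) (hεα : ε < α)
    (T Te : Lp ℝ 2 π →L[ℝ] Lp ℝ 2 π) (hT : ActsOn π P T) (hTe : ActsOn π Pe Te)
    (hge : IsGeomErg π T α) (hdiff : ‖T - Te‖ ≤ ε)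
    (πe : Measure X) [IsProbabilityMeasure πe] (hstate : πe.bind (fun x => Pe x) = πe)
    (hac1 : πe ≪ π) (hac2 : π ≪ πe)
    (htv : Tendsto (fun n => (mIter Pe n π - πe) Set.univ + (πe - mIter Pe n π) Set.univ)
      atTop (nhds 0)) :
    MemLp (rnd π πe) 2 π ∧ (eLpNorm (rnd π πe) 2 π).toReal ≤ α / (α - ε) := by
  have hac : ∀ n, mIter Pe n π ≪ π := fun n =>
    (mIter_absolutelyContinuous hstate hac2 n).trans hac1
  have hbound := eLpNorm_rnd_mIter_le hstat hα1 hε0 hεα hT hTe hge hdiff hac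
  have hlim := eLpNorm_rnd_le_of_tendsto_tv hac hac1 htv hbound
  exact ⟨⟨(measurable_rnd π πe).aestronglyMeasurable, hlim.trans_lt ofReal_lt_top⟩,
    ENNReal.toReal_le_of_le_ofReal (div_nonneg (by linarith) (by linarith)) hlim⟩

/-- If `ε < α`, `π ≪ π_ε ≪ π` and `πP_εⁿ → π_ε` in total variation, then
`dπ_ε/dπ ∈ L²(π)` with `‖π_ε‖₂ ≤ α/(α−ε)`. -/
theorem stmt3 (π : Measure X) [IsProbabilityMeasure π] (P Pe : Kernel X X)
    [IsMarkovKernel P] [IsMarkovKernel Pe]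
    (hstat : π.bind (fun x => P x) = π)
    (α ε : ℝ) (hα0 : 0 < α) (hα1 : α < 1) (hε0 : 0 < ε) (hεα : ε < α)
    (T Te : Lp ℝ 2 π →L[ℝ] Lp ℝ 2 π) (hT : ActsOn π P T) (hTe : ActsOn π Pe Te)
    (hge : IsGeomErg π T α) (hdiff : ‖T - Te‖ ≤ ε)
    (πe : Measure X) [IsProbabilityMeasure πe] (hstate : πe.bind (fun x => Pe x) = πe)
    (hac1 : πe ≪ π) (hac2 : π ≪ πe)
    (htv : Tendsto (fun n => (mIter Pe n π - πe) Set.univ + (πe - mIter Pe n π) Set.univ)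
      atTop (nhds 0)) :
    MemLp (rnd π πe) 2 π ∧ (eLpNorm (rnd π πe) 2 π).toReal ≤ α / (α - ε) :=
  stmt3_general π P Pe hstat α ε hα1 hε0 hεα T Te hT hTe hge hdiff πe hstate hac1 hac2 htv
end

section
/- In the Metropolis–Hastings / noisy Metropolis–Hastings setting, for every finite measure ν with density ν(x) with respect to λ (such that all integrals below are defined), the signed measures νP − νP̂ and νZ' − νΓ' coincide: for every measurable set A, (νP)(A) − (νP̂)(A) = ∫_A ∫ δ'(y|x) q(y|x) ν(x) λ(dx) λ(dy) − ∫_A γ'(y) ν(y) λ(dy). Equivalently, P − P̂ = Z' − Γ' as operators on measures with λ-densities. -/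
open MeasureTheory ProbabilityTheory Filter ENNReal

variable {X Z : Type*} [MeasurableSpace X] [MeasurableSpace Z]

/-- The Metropolis–Hastings acceptance ratio `α(y|x) = π(y)q(x|y)/(π(x)q(y|x))`,
for target density `pd` and proposal density `q`, where `q y x = q(y|x)`. -/
noncomputable def mhRatio (pd : X → ℝ) (q : X → X → ℝ) (y x : X) : ℝ :=
  pd y * q x y / (pd x * q y x)

/-- The averaged noisy acceptance probability `∫ min(1, α̂(y|x,z)) f_y(z) dz`. -/
noncomputable def accHat (zeta : Measure Z) (fz : X → Z → ℝ) (ahat : X → X → Z → ℝ)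
    (y x : X) : ℝ := ∫ z, min 1 (ahat y x z) * fz y z ∂zeta

/-- `δ'(y|x) = ∫ (min(1,α(y|x)) − min(1,α̂(y|x,z))) f_y(z) dz`. -/
noncomputable def deltaP (zeta : Measure Z) (pd : X → ℝ) (q : X → X → ℝ)
    (fz : X → Z → ℝ) (ahat : X → X → Z → ℝ) (y x : X) : ℝ :=
  ∫ z, (min 1 (mhRatio pd q y x) - min 1 (ahat y x z)) * fz y z ∂zeta

/-- `δ(y|x) = ∫ |α(y|x) − α̂(y|x,z)| f_y(z) dz`. -/
noncomputable def deltaAbs (zeta : Measure Z) (pd : X → ℝ) (q : X → X → ℝ)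
    (fz : X → Z → ℝ) (ahat : X → X → Z → ℝ) (y x : X) : ℝ :=
  ∫ z, |mhRatio pd q y x - ahat y x z| * fz y z ∂zeta

/-- `γ'(x) = ∫ δ'(y|x) q(y|x) λ(dy)`. -/
noncomputable def gammaP (lam : Measure X) (zeta : Measure Z) (pd : X → ℝ) (q : X → X → ℝ)
    (fz : X → Z → ℝ) (ahat : X → X → Z → ℝ) (x : X) : ℝ :=
  ∫ y, deltaP zeta pd q fz ahat y x * q y x ∂lam

/-- `(νP)(A)` for the Metropolis–Hastings kernel `P` and a measure with `λ`-density `ν`. -/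
noncomputable def nuP (lam : Measure X) (pd : X → ℝ) (q : X → X → ℝ)
    (ν : X → ℝ) (A : Set X) : ℝ :=
  (∫ x in A, (1 - ∫ y, min 1 (mhRatio pd q y x) * q y x ∂lam) * ν x ∂lam)
    + ∫ x, (∫ y in A, min 1 (mhRatio pd q y x) * q y x ∂lam) * ν x ∂lam

/-- `(νP̂)(A (for the noisy Metropolis–Hastings kernel `P̂`. -/
noncomputable def nuPhat (lam : Measure X) (zeta : Measure Z) (pd : X → ℝ) (q : X → X → ℝ)
    (fz : X → Z → ℝ) (ahat : X → X → Z → ℝ) (ν : X → ℝ) (A : Set X) : ℝ :=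
  (∫ x in A, (1 - ∫ y, accHat zeta fz ahat y x * q y x ∂lam) * ν x ∂lam)
    + ∫ x, (∫ y in A, accHat zeta fz ahat y x * q y x ∂lam) * ν x ∂lam

/-- The difference of the MH and noisy-MH kernels: `νP − νP̂ = νZ' − νΓ'` as
(signed) measures, evaluated on any measurable set `A`. -/
theorem stmt16 (lam : Measure X) [SigmaFinite lam] (zeta : Measure Z) [SigmaFinite zeta]
    (pd : X → ℝ) (q : X → X → ℝ) (fz : X → Z → ℝ) (ahat : X → X → Z → ℝ)
    (hpdm : Measurable pd) (hqm : Measurable (Function.uncurry q))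
    (hfzm : Measurable (Function.uncurry fz))
    (hahatm : Measurable (fun p : X × X × Z => ahat p.1 p.2.1 p.2.2))
    (hpd0 : ∀ x, 0 ≤ pd x) (hq0 : ∀ y x, 0 ≤ q y x) (hfz0 : ∀ y z, 0 ≤ fz y z)
    (hahat0 : ∀ y x z, 0 ≤ ahat y x z)
    (hpd1 : ∫ x, pd x ∂lam = 1) (hq1 : ∀ x, ∫ y, q y x ∂lam = 1)
    (hfz1 : ∀ y, ∫ z, fz y z ∂zeta = 1)
    (ν : X → ℝ) (hνm : Measurable ν) (hν0 : ∀ x, 0 ≤ ν x) (hνi : Integrable ν lam)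
    (hint1 : Integrable (fun p : X × X =>
      min 1 (mhRatio pd q p.1 p.2) * q p.1 p.2 * ν p.2) (lam.prod lam))
    (hint2 : Integrable (fun p : (X × X) × Z =>
      min 1 (ahat p.1.1 p.1.2 p.2) * fz p.1.1 p.2 * q p.1.1 p.1.2 * ν p.1.2)
      ((lam.prod lam).prod zeta))
    (A : Set X) (hA : MeasurableSet A) :
    nuP lam pd q ν A - nuPhat lam zeta pd q fz ahat ν A
      = (∫ y in A, (∫ x, deltaP zeta pd q fz ahat y x * q y x * ν x ∂lam) ∂lam)
        - ∫ y in A, gammaP lam zeta pd q fz ahat y * ν y ∂lam := by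
  -- abbreviations
  set g : X → X → ℝ := fun y x => min 1 (mhRatio pd q y x) * q y x * ν x with hg_def
  set h : X → X → ℝ := fun y x => accHat zeta fz ahat y x * q y x * ν x with hh_def
  -- fz sections are integrable
  have hfzI : ∀ y, Integrable (fun z => fz y z) zeta := by
    intro y
    by_contra hc
    have := hfz1 y
    rw [integral_undef hc] at this
    norm_num at this
  have hminI : ∀ y x, Integrable (fun z => min 1 (ahat y x z) * fz y z) zeta := by
    intro y x
    refine (hfzI y).mono' ?_ (Eventually.of_forall fun z => ?_)
    · exact ((measurable_const.min (hahatm.comp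
        (measurable_const.prodMk (measurable_const.prodMk measurable_id)))).mul
        (hfzm.comp (measurable_const.prodMk measurable_id))).aestronglyMeasurable
    · have h0 : 0 ≤ min 1 (ahat y x z) := le_min zero_le_one (hahat0 y x z)
      rw [Real.norm_eq_abs, abs_of_nonneg (mul_nonneg h0 (hfz0 y z))]
      exact mul_le_of_le_one_left (hfz0 y z) (min_le_left _ _)
  have hdelta : ∀ y x, deltaP zeta pd q fz ahat y x
      = min 1 (mhRatio pd q y x) - accHat zeta fz ahat y x := by
    intro y x
    unfold deltaP accHat
    rw [show (fun z => (min 1 (mhRatio pd q y x) - min 1 (ahat y x z)) * fz y z)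
        = fun z => min 1 (mhRatio pd q y x) * fz y z - min 1 (ahat y x z) * fz y z
        from funext fun z => by ring]
    rw [integral_sub ((hfzI y).const_mul _) (hminI y x), integral_const_mul, hfz1 y, mul_one]
  -- integrability of h on the product
  have hhI : Integrable (fun p : X × X => h p.1 p.2) (lam.prod lam) := by
    refine hint2.integral_prod_left.congr (Eventually.of_forall fun p => ?_)
    show (∫ z, min 1 (ahat p.1 p.2 z) * fz p.1 z * q p.1 p.2 * ν p.2 ∂zeta) = h p.1 p.2
    rw [show (fun z => min 1 (ahat p.1 p.2 z) * fz p.1 z * q p.1 p.2 * ν p.2)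
        = fun z => (min 1 (ahat p.1 p.2 z) * fz p.1 z) * (q p.1 p.2 * ν p.2)
        from funext fun z => by ring, integral_mul_const]
    simp only [hh_def, accHat]
    ring
  have hgI : Integrable (fun p : X × X => g p.1 p.2) (lam.prod lam) := hint1
  -- restricted product measure
  have hprodA : (lam.prod lam).restrict (A ×ˢ Set.univ) = (lam.restrict A).prod lam := by
    rw [← Measure.prod_restrict, Measure.restrict_univ]
  have hgA : Integrable (fun p : X × X => g p.1 p.2) ((lam.restrict A).prod lam) :=
    hprodA ▸ hgI.restrict
  have hhA : Integrable (fun p : X × X => h p.1 p.2) ((lam.restrict A).prod lam) :=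
    hprodA ▸ hhI.restrict
  -- integrated-out functions
  have hGi : Integrable (fun x => ∫ y, g y x ∂lam) lam := hgI.integral_prod_right
  have hHi : Integrable (fun x => ∫ y, h y x ∂lam) lam := hhI.integral_prod_right
  have hGAi : Integrable (fun x => ∫ y in A, g y x ∂lam) lam := hgA.integral_prod_right
  have hHAi : Integrable (fun x => ∫ y in A, h y x ∂lam) lam := hhA.integral_prod_right
  -- pointwise identities for the kernel terms
  have E1 : ∫ x in A, (1 - ∫ y, min 1 (mhRatio pd q y x) * q y x ∂lam) * ν x ∂lam
      = (∫ x in A, ν x ∂lam) - ∫ x in A, (∫ y, g y x ∂lam) ∂lam := by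
    rw [← integral_sub hνi.restrict hGi.restrict]
    refine integral_congr_ae (Eventually.of_forall fun x => ?_)
    show (1 - ∫ y, min 1 (mhRatio pd q y x) * q y x ∂lam) * ν x = ν x - ∫ y, g y x ∂lam
    have : (∫ y, g y x ∂lam) = (∫ y, min 1 (mhRatio pd q y x) * q y x ∂lam) * ν x :=
      integral_mul_const _ _
    rw [this]; ring
  have E2 : ∫ x in A, (1 - ∫ y, accHat zeta fz ahat y x * q y x ∂lam) * ν x ∂lam
      = (∫ x in A, ν x ∂lam) - ∫ x in A, (∫ y, h y x ∂lam) ∂lam := by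
    rw [← integral_sub hνi.restrict hHi.restrict]
    refine integral_congr_ae (Eventually.of_forall fun x => ?_)
    show (1 - ∫ y, accHat zeta fz ahat y x * q y x ∂lam) * ν x = ν x - ∫ y, h y x ∂lam
    have : (∫ y, h y x ∂lam) = (∫ y, accHat zeta fz ahat y x * q y x ∂lam) * ν x :=
      integral_mul_const _ _
    rw [this]; ring
  have E3 : ∫ x, (∫ y in A, min 1 (mhRatio pd q y x) * q y x ∂lam) * ν x ∂lam
      = ∫ x, (∫ y in A, g y x ∂lam) ∂lam := by
    refine integral_congr_ae (Eventually.of_forall fun x => ?_)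
    show (∫ y in A, min 1 (mhRatio pd q y x) * q y x ∂lam) * ν x = ∫ y in A, g y x ∂lam
    exact (integral_mul_const _ _).symm
  have E4 : ∫ x, (∫ y in A, accHat zeta fz ahat y x * q y x ∂lam) * ν x ∂lam
      = ∫ x, (∫ y in A, h y x ∂lam) ∂lam := by
    refine integral_congr_ae (Eventually.of_forall fun x => ?_)
    show (∫ y in A, accHat zeta fz ahat y x * q y x ∂lam) * ν x = ∫ y in A, h y x ∂lam
    exact (integral_mul_const _ _).symm
  -- the swap identity
  have E5 : (∫ x, (∫ y in A, g y x ∂lam) ∂lam) - ∫ x, (∫ y in A, h y x ∂lam) ∂lam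
      = ∫ y in A, (∫ x, (g y x - h y x) ∂lam) ∂lam := by
    rw [← integral_sub hGAi hHAi]
    have hswap := integral_integral_swap (f := fun y x => g y x - h y x)
      (μ := lam.restrict A) (ν := lam) (hgA.sub hhA)
    rw [hswap]
    refine integral_congr_ae ?_
    filter_upwards [hgA.prod_left_ae, hhA.prod_left_ae] with x h1 h2
    show (∫ y in A, g y x ∂lam) - (∫ y in A, h y x ∂lam) = ∫ y in A, (g y x - h y x) ∂lam
    exact (integral_sub h1 h2).symm
  have E6 : ∫ y in A, (∫ x, (g y x - h y x) ∂lam) ∂lam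
      = ∫ y in A, (∫ x, deltaP zeta pd q fz ahat y x * q y x * ν x ∂lam) ∂lam := by
    refine integral_congr_ae (Eventually.of_forall fun y => ?_)
    refine integral_congr_ae (Eventually.of_forall fun x => ?_)
    show g y x - h y x = deltaP zeta pd q fz ahat y x * q y x * ν x
    simp only [hg_def, hh_def, hdelta y x]
    ring
  have E7 : ∫ y in A, gammaP lam zeta pd q fz ahat y * ν y ∂lam
      = (∫ x in A, (∫ y, g y x ∂lam) ∂lam) - ∫ x in A, (∫ y, h y x ∂lam) ∂lam := by
    rw [← integral_sub hGi.restrict hHi.restrict]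
    refine integral_congr_ae ?_
    filter_upwards [ae_restrict_of_ae hgI.prod_left_ae, ae_restrict_of_ae hhI.prod_left_ae]
      with x h1 h2
    show gammaP lam zeta pd q fz ahat x * ν x = ∫ y, g y x ∂lam - ∫ y, h y x ∂lam
    have : gammaP lam zeta pd q fz ahat x * ν x = ∫ y, (g y x - h y x) ∂lam := by
      unfold gammaP
      rw [← integral_mul_const]
      refine integral_congr_ae (Eventually.of_forall fun y => ?_)
      show deltaP zeta pd q fz ahat y x * q y x * ν x = g y x - h y x
      simp only [hg_def, hh_def, hdelta y x]
      ring
    rw [this, integral_sub h1 h2]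
  unfold nuP nuPhat
  rw [E1, E2, E3, E4, E7]
  linarith [E5, E6]
end

section
/- Let P be a Markov kernel on X with π stationary. Let μ be a probability measure with μ ≪ π and dμ/dπ ∈ L²(π), and let f, g ∈ L⁴(π). Then for all natural numbers t, s, the path covariance admits the exact decomposition: Cov_μ(f(X_t), g(X_{t+s})) = ⟨f₀, Fˢ g₀⟩_{L²(π)} + ⟨dμ/dπ − 1, Fᵗ(f₀ · (Fˢ g₀))⟩_{L²(π)} − (μPᵗf − πf)(μP^{t+s}g − πg), where f₀ := f − πf, g₀ := g − πg, and F is the forward operator (Fh)(x) := ∫ h(y) P(x,dy). -/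
open MeasureTheory ProbabilityTheory Filter ENNReal

variable {X : Type*} [MeasurableSpace X]

/-!
Write `ν = μPᵗ`. Unfolding the definition, the path covariance is the `ν`-covariance of `f` and
`Fˢg`, since `μP^{t+s}g = ν(Fˢg)`. Recentring both factors at their `π`-means turns it into
`∫ f₀ · Fˢg₀ dν − (μPᵗf − πf)(μP^{t+s}g − πg)`, and for any `h ∈ L²(π)` we have
`∫ h dν = ∫ (dμ/dπ) · Fᵗh dπ` and, by stationarity, `∫ Fᵗh dπ = ∫ h dπ`; hence
`∫ f₀ · Fˢg₀ dν = ⟨f₀, Fˢg₀⟩ + ⟨dμ/dπ − 1, Fᵗ(f₀ · Fˢg₀)⟩`.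

All integrals are finite because `F` is a contraction on every `Lᵖ(π)`, `1 ≤ p < ∞` (Jensen
plus stationarity), and because an `L²(π)` function is `ν`-integrable by Cauchy–Schwarz against
`dμ/dπ ∈ L²(π)`. Since `f` and `g` are only `π`-a.e. strongly measurable, every identity is
first obtained `π`-a.e. and then transported along the chain.
-/

section KernelComp

variable {α β E : Type*} [MeasurableSpace α] [MeasurableSpace β] [NormedAddCommGroup E]
  {μ : Measure α} {κ : Kernel α β}

lemma integral_measure_comp [NormedSpace ℝ E] {f : β → E} (hf : Integrable f (κ ∘ₘ μ)) :
    ∫ y, f y ∂(κ ∘ₘ μ) = ∫ x, ∫ y, f y ∂κ x ∂μ := by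
  rw [Measure.comp_eq_comp_const_apply, Kernel.integral_comp]
  · simp
  · rwa [← Measure.comp_eq_comp_const_apply]

lemma eLpNorm_integral_kernel_le [NormedSpace ℝ E] [IsMarkovKernel κ] {p : ℝ≥0∞} (hp : 1 ≤ p)
    (hp_top : p ≠ ∞) {f : β → E} (hf : StronglyMeasurable f) :
    eLpNorm (fun x ↦ ∫ y, f y ∂κ x) p μ ≤ eLpNorm f p (κ ∘ₘ μ) := by
  have hp0 : p ≠ 0 := (zero_lt_one.trans_le hp).ne'
  have hp_pos : 0 < p.toReal := ENNReal.toReal_pos hp0 hp_top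
  rw [eLpNorm_eq_lintegral_rpow_enorm_toReal hp0 hp_top,
    eLpNorm_eq_lintegral_rpow_enorm_toReal hp0 hp_top,
    Measure.lintegral_bind κ.aemeasurable (by fun_prop)]
  gcongr with x
  calc ‖∫ y, f y ∂κ x‖ₑ ^ p.toReal ≤ eLpNorm f p (κ x) ^ p.toReal := by
        gcongr
        calc ‖∫ y, f y ∂κ x‖ₑ ≤ eLpNorm f 1 (κ x) :=
              (enorm_integral_le_lintegral_enorm _).trans_eq eLpNorm_one_eq_lintegral_enorm.symm
          _ ≤ eLpNorm f p (κ x) := eLpNorm_le_eLpNorm_of_exponent_le hp hf.aestronglyMeasurable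
    _ = ∫⁻ y, ‖f y‖ₑ ^ p.toReal ∂κ x := by
        rw [eLpNorm_eq_lintegral_rpow_enorm_toReal hp0 hp_top, ← ENNReal.rpow_mul,
          one_div_mul_cancel hp_pos.ne', ENNReal.rpow_one]

lemma MeasureTheory.MemLp.integral_kernel [NormedSpace ℝ E] [IsMarkovKernel κ] {p : ℝ≥0∞}
    (hp : 1 ≤ p) (hp_top : p ≠ ∞) {f : β → E} (hf : MemLp f p (κ ∘ₘ μ)) :
    MemLp (fun x ↦ ∫ y, f y ∂κ x) p μ := by
  set f' := hf.1.mk f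
  have hf' : StronglyMeasurable f' := hf.1.stronglyMeasurable_mk
  have h_ae : (fun x ↦ ∫ y, f' y ∂κ x) =ᵐ[μ] fun x ↦ ∫ y, f y ∂κ x := by
    filter_upwards [Measure.ae_ae_of_ae_comp hf.1.ae_eq_mk] with x hx
    exact integral_congr_ae (EventuallyEq.symm hx)
  refine MemLp.ae_eq h_ae ⟨hf'.integral_kernel.aestronglyMeasurable, ?_⟩
  calc eLpNorm (fun x ↦ ∫ y, f' y ∂κ x) p μ ≤ eLpNorm f' p (κ ∘ₘ μ) :=
        eLpNorm_integral_kernel_le hp hp_top hf'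
    _ = eLpNorm f p (κ ∘ₘ μ) := eLpNorm_congr_ae hf.1.ae_eq_mk.symm
    _ < ∞ := hf.2

lemma integrable_comp_of_memLp_two [IsMarkovKernel κ] {ν : Measure α} [IsFiniteMeasure ν]
    [SigmaFinite μ] [μ.HaveLebesgueDecomposition ν] (hμν : μ ≪ ν)
    (hρ : MemLp (fun x ↦ (μ.rnDeriv ν x).toReal) 2 ν) {f : β → E} (hf : MemLp f 2 (κ ∘ₘ ν)) :
    Integrable f (κ ∘ₘ μ) := by
  rw [Measure.integrable_comp_iff (hf.1.mono_ac (hμν.comp_right κ))]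
  constructor
  · exact hμν.ae_le (Measure.ae_integrable_of_integrable_comp (hf.integrable one_le_two))
  · have hG : MemLp (fun x ↦ ∫ y, ‖f y‖ ∂κ x) 2 ν :=
      MemLp.integral_kernel one_le_two ofNat_ne_top hf.norm
    exact (integrable_toReal_rnDeriv_mul_iff hμν).mp (hρ.integrable_mul hG)

end KernelComp

section Integrals

variable {α : Type*} [MeasurableSpace α]

lemma integral_sub_mul_sub {ν : Measure α} [IsProbabilityMeasure ν] {u v : α → ℝ}
    (hu : Integrable u ν) (hv : Integrable v ν) (huv : Integrable (fun x ↦ u x * v x) ν)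
    (c d : ℝ) :
    ∫ x, (u x - c) * (v x - d) ∂ν
      = ∫ x, u x * v x ∂ν - d * ∫ x, u x ∂ν - c * ∫ x, v x ∂ν + c * d := by
  have h_expand : (fun x ↦ (u x - c) * (v x - d))
      = fun x ↦ u x * v x - d * u x - c * v x + c * d := by
    ext x; ring
  have h_lin : Integrable (fun x ↦ u x * v x - d * u x) ν := huv.sub (hu.const_mul d)
  rw [h_expand, integral_add ?_ (integrable_const _), integral_sub h_lin (hv.const_mul c),
    integral_sub huv (hu.const_mul d), integral_const_mul, integral_const_mul]
  · simp
  · exact h_lin.sub (hv.const_mul c)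

lemma integral_centered_mul_eq {ν : Measure α} [IsProbabilityMeasure ν] {u v : α → ℝ}
    (hu : Integrable u ν) (hv : Integrable v ν) (huv : Integrable (fun x ↦ u x * v x) ν)
    (c d : ℝ) :
    ∫ x, (u x - ∫ y, u y ∂ν) * (v x - ∫ y, v y ∂ν) ∂ν
      = ∫ x, (u x - c) * (v x - d) ∂ν - (∫ x, u x ∂ν - c) * (∫ x, v x ∂ν - d) := by
  rw [integral_sub_mul_sub hu hv huv, integral_sub_mul_sub hu hv huv]
  ring

lemma integral_rnd_sub_one_mul {π μ : Measure α} [IsFiniteMeasure π] [SigmaFinite μ]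
    (hμ : μ ≪ π) (hρ : MemLp (rnd π μ) 2 π) {h : α → ℝ} (hh : MemLp h 2 π) :
    ∫ x, (rnd π μ x - 1) * h x ∂π = ∫ x, h x ∂μ - ∫ x, h x ∂π := by
  have hρh : Integrable (fun x ↦ rnd π μ x * h x) π := hρ.integrable_mul hh
  simp only [sub_mul, one_mul]
  rw [integral_sub hρh (hh.integrable one_le_two)]
  exact congrArg (· - _) (integral_toReal_rnDeriv_mul hμ)

instance holderTriple_four_four_two : HolderTriple 4 4 2 where
  inv_add_inv_eq_inv := by
    rw [← two_mul, show (4 : ℝ≥0∞) = 2 * 2 by norm_num, ENNReal.mul_inv (by simp) (by simp),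
      ← mul_assoc, ENNReal.mul_inv_cancel (by simp) (by simp), one_mul]

end Integrals

section KernelPower

variable {P : Kernel X X}

instance isMarkovKernel_kpow [IsMarkovKernel P] (n : ℕ) : IsMarkovKernel (kpow P n) := by
  induction n with
  | zero => rw [kpow]; infer_instance
  | succ n ih => rw [kpow]; infer_instance

lemma kpow_add (m n : ℕ) : kpow P (m + n) = kpow P n ∘ₖ kpow P m := by
  induction m with
  | zero => rw [Nat.zero_add, kpow, Kernel.comp_id]
  | succ m ih => rw [Nat.add_right_comm, kpow, ih, kpow, Kernel.comp_assoc]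

lemma kpow_comp_eq_self {π : Measure X} (hπ : P ∘ₘ π = π) (n : ℕ) : kpow P n ∘ₘ π = π := by
  induction n with
  | zero => rw [kpow, Measure.id_comp]
  | succ n ih => rw [kpow, ← Measure.comp_assoc, hπ, ih]

end KernelPower

section ForwardOperator

variable {π μ : Measure X} {P : Kernel X X}

lemma kInt_congr_ae (hπ : P ∘ₘ π = π) {f g : X → ℝ} (h : f =ᵐ[π] g) (k : ℕ) :
    kInt P k f =ᵐ[π] kInt P k g := by
  rw [← kpow_comp_eq_self hπ k] at h
  filter_upwards [Measure.ae_ae_of_ae_comp h] with x hx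
  exact integral_congr_ae hx

lemma kInt_sub_const_ae [IsMarkovKernel P] (hπ : P ∘ₘ π = π) {f : X → ℝ} (hf : Integrable f π)
    (k : ℕ) (c : ℝ) : kInt P k (fun y ↦ f y - c) =ᵐ[π] fun x ↦ kInt P k f x - c := by
  rw [← kpow_comp_eq_self hπ k] at hf
  filter_upwards [Measure.ae_integrable_of_integrable_comp hf] with x hx
  simp [kInt, integral_sub hx (integrable_const c)]

lemma MeasureTheory.MemLp.kInt [IsMarkovKernel P] (hπ : P ∘ₘ π = π) {p : ℝ≥0∞} (hp : 1 ≤ p)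
    (hp_top : p ≠ ∞) {f : X → ℝ} (hf : MemLp f p π) (k : ℕ) : MemLp (_root_.kInt P k f) p π := by
  rw [← kpow_comp_eq_self hπ k] at hf
  exact MemLp.integral_kernel hp hp_top hf

lemma integral_kInt (hπ : P ∘ₘ π = π) {f : X → ℝ} (hf : Integrable f π) (k : ℕ) :
    ∫ x, kInt P k f x ∂π = ∫ x, f x ∂π := by
  rw [← kpow_comp_eq_self hπ k] at hf
  conv_rhs => rw [← kpow_comp_eq_self hπ k]
  exact (integral_measure_comp hf).symm

lemma integrable_comp_kpow [IsMarkovKernel P] (hπ : P ∘ₘ π = π) [IsFiniteMeasure π]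
    [SigmaFinite μ] (hμ : μ ≪ π) (hρ : MemLp (rnd π μ) 2 π) {f : X → ℝ} (hf : MemLp f 2 π)
    (k : ℕ) : Integrable f (kpow P k ∘ₘ μ) := by
  rw [← kpow_comp_eq_self hπ k] at hf
  exact integrable_comp_of_memLp_two hμ hρ hf

lemma mkInt_eq_integral {f : X → ℝ} {k : ℕ} (hf : Integrable f (kpow P k ∘ₘ μ)) :
    mkInt P μ k f = ∫ y, f y ∂(kpow P k ∘ₘ μ) :=
  (integral_measure_comp hf).symm

lemma mkInt_congr_ae (hπ : P ∘ₘ π = π) (hμ : μ ≪ π) {f g : X → ℝ} (h : f =ᵐ[π] g) (k : ℕ) :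
    mkInt P μ k f = mkInt P μ k g :=
  integral_congr_ae (hμ.ae_le (kInt_congr_ae hπ h k))

lemma mkInt_add {f : X → ℝ} {m n : ℕ} (hf : Integrable f (kpow P (m + n) ∘ₘ μ)) :
    mkInt P μ (m + n) f = mkInt P μ m (kInt P n f) := by
  refine integral_congr_ae ?_
  filter_upwards [Measure.ae_integrable_of_integrable_comp hf] with x hx
  rw [kpow_add] at hx
  simp only [kInt, kpow_add, Kernel.integral_comp hx]

lemma integral_rnd_sub_one_mul_kInt [IsMarkovKernel P] (hπ : P ∘ₘ π = π) [IsFiniteMeasure π]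
    [SigmaFinite μ] (hμ : μ ≪ π) (hρ : MemLp (rnd π μ) 2 π) {h : X → ℝ} (hh : MemLp h 2 π)
    (k : ℕ) : ∫ x, (rnd π μ x - 1) * kInt P k h x ∂π = mkInt P μ k h - ∫ x, h x ∂π := by
  rw [integral_rnd_sub_one_mul hμ hρ (hh.kInt hπ one_le_two ofNat_ne_top k),
    integral_kInt hπ (hh.integrable one_le_two)]
  rfl

lemma memLp_two_sub_mul_kInt_sub [IsMarkovKernel P] (hπ : P ∘ₘ π = π) [IsFiniteMeasure π]
    {f g : X → ℝ} (hf : MemLp f 4 π) (hg : MemLp g 4 π) (s : ℕ) (c d : ℝ) :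
    MemLp (fun y ↦ (f y - c) * (kInt P s g y - d)) 2 π :=
  ((hg.kInt hπ (by norm_num) (by norm_num) s).sub (memLp_const d)).mul (hf.sub (memLp_const c))

lemma covPath_eq_integral [IsMarkovKernel P] (hπ : P ∘ₘ π = π) [IsFiniteMeasure π]
    [SigmaFinite μ] (hμ : μ ≪ π) (hρ : MemLp (rnd π μ) 2 π) {f g : X → ℝ} (hf : MemLp f 4 π)
    (hg : MemLp g 4 π) (t s : ℕ) :
    covPath P μ t s f g = ∫ y, (f y - mkInt P μ t f) * (kInt P s g y - mkInt P μ (t + s) g)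
      ∂(kpow P t ∘ₘ μ) := by
  have h_unfold : covPath P μ t s f g = mkInt P μ t
      (fun y ↦ (f y - mkInt P μ t f) * kInt P s (fun z ↦ g z - mkInt P μ (t + s) g) y) := by
    simp only [covPath, mkInt, kInt, integral_const_mul]
  rw [h_unfold, ← mkInt_eq_integral (integrable_comp_kpow hπ hμ hρ
    (memLp_two_sub_mul_kInt_sub hπ hf hg s _ _) t)]
  refine mkInt_congr_ae hπ hμ ?_ t
  filter_upwards [kInt_sub_const_ae hπ (hg.integrable (by norm_num)) s (mkInt P μ (t + s) g)]
    with y hy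
  rw [hy]

end ForwardOperator

/-- Exact decomposition of the path covariance `Cov_μ(f(X_t), g(X_{t+s}))` in terms of
the forward operator `F`. -/
theorem stmt19 (π : Measure X) [IsProbabilityMeasure π] (P : Kernel X X) [IsMarkovKernel P]
    (hstat : π.bind (fun x => P x) = π)
    (μ : Measure X) [IsProbabilityMeasure μ] (hμac : μ ≪ π) (hμ2 : MemLp (rnd π μ) 2 π)
    (f g : X → ℝ) (hf : MemLp f 4 π) (hg : MemLp g 4 π) (t s : ℕ) :
    covPath P μ t s f g
      = (∫ x, (f x - ∫ y, f y ∂π)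
            * kInt P s (fun y => g y - ∫ y', g y' ∂π) x ∂π)
        + (∫ x, (rnd π μ x - 1)
            * kInt P t (fun y => (f y - ∫ y', f y' ∂π)
                * kInt P s (fun w => g w - ∫ y', g y' ∂π) y) x ∂π)
        - (mkInt P μ t f - ∫ x, f x ∂π) * (mkInt P μ (t + s) g - ∫ x, g x ∂π) := by
  set πf := ∫ y, f y ∂π
  set πg := ∫ y, g y ∂π
  have hν {h : X → ℝ} (hh : MemLp h 2 π) : Integrable h (kpow P t ∘ₘ μ) :=
    integrable_comp_kpow hstat hμac hμ2 hh t
  have hg2 : MemLp g 2 π := hg.mono_exponent (by norm_num)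
  have hK : MemLp (kInt P s g) 2 π := hg2.kInt hstat one_le_two ofNat_ne_top s
  have hfK : MemLp (fun y ↦ f y * kInt P s g y) 2 π := by
    simpa using memLp_two_sub_mul_kInt_sub hstat hf hg s 0 0
  have ha : mkInt P μ t f = ∫ y, f y ∂(kpow P t ∘ₘ μ) :=
    mkInt_eq_integral (hν (hf.mono_exponent (by norm_num)))
  have hb : mkInt P μ (t + s) g = ∫ y, kInt P s g y ∂(kpow P t ∘ₘ μ) := by
    rw [mkInt_add (integrable_comp_kpow hstat hμac hμ2 hg2 _),
      mkInt_eq_integral (hν hK)]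
  have hW_ae : (fun y ↦ (f y - πf) * kInt P s (fun w ↦ g w - πg) y)
      =ᵐ[π] fun y ↦ (f y - πf) * (kInt P s g y - πg) := by
    filter_upwards [kInt_sub_const_ae hstat (hg.integrable (by norm_num)) s πg] with y hy
    rw [hy]
  have hW := memLp_two_sub_mul_kInt_sub hstat hf hg s πf πg
  rw [covPath_eq_integral hstat hμac hμ2 hf hg, ha, hb,
    integral_centered_mul_eq (hν (hf.mono_exponent (by norm_num))) (hν hK) (hν hfK) πf πg,
    integral_rnd_sub_one_mul_kInt hstat hμac hμ2 (hW.ae_eq hW_ae.symm),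
    mkInt_congr_ae hstat hμac hW_ae, mkInt_eq_integral (hν hW)]
  ring
end
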